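/- Let β = 1, q ∈ (0, 1), a ≥ 0, b ≥ 0, and let Z₁, Z₂, Y₁, Y₂ be nonnegative random variables on a probability space such that the pair (Z₁, Z₂) is independent of the pair (Y₁, Y₂), and such that, as z → ∞: z·P(Z_i > z) → 1 for i = 1, 2; z·P(Y_i > z) → 1 for i = 1, 2; z·P(Z₁ > z, Z₂ > z) → a; and z·P(Y₁ > z, Y₂ > z) → b. Then z·P(max{qZ₁, (1−q)Y₁} > z, max{qZ₂, (1−q)Y₂} > z) → q·a + (1−q)·b as z → ∞. (Thus for β = 1 the max-mixture has upper tail-dependence coefficient λ̃_U = q·λ_U^Z + (1−q)·λ_U^Y.) -/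

import Mathlib

open MeasureTheory Filter Real ProbabilityTheory Topology

/-!
The joint exceedance event of the mixture at level `z` is
`({Z₁ > z/q} ∪ {Y₁ > z/(1-q)}) ∩ ({Z₂ > z/q} ∪ {Y₂ > z/(1-q)})`. Its probability differs from
`P(Z₁, Z₂ > z/q) + P(Y₁, Y₂ > z/(1-q))` by at most the two mixed terms
`P(Zᵢ > z/q, Yⱼ > z/(1-q))`, `i ≠ j`. By independence these are products of two tails of order
`1/z`, hence `o(1/z)`, while rescaling the joint exceedance rates gives the two main terms
`(q a + (1-q) b)/z + o(1/z)`.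
-/

theorem tendsto_mul_comp_div_const {f : ℝ → ℝ} {c r : ℝ} (hr : 0 < r)
    (hf : Tendsto (fun z => z * f z) atTop (𝓝 c)) :
    Tendsto (fun z => z * f (z / r)) atTop (𝓝 (r * c)) := by
  refine ((hf.comp (tendsto_id.atTop_div_const hr)).const_mul r).congr fun z => ?_
  simp only [Function.comp_apply, id]
  field_simp

theorem tendsto_mul_mul_of_tendsto_mul {f g : ℝ → ℝ} {c d : ℝ}
    (hf : Tendsto (fun z => z * f z) atTop (𝓝 c)) (hg : Tendsto (fun z => z * g z) atTop (𝓝 d)) :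
    Tendsto (fun z => z * (f z * g z)) atTop (𝓝 0) := by
  have h := (hf.mul hg).mul tendsto_inv_atTop_zero
  rw [mul_zero] at h
  refine h.congr' ?_
  filter_upwards [eventually_gt_atTop 0] with z hz
  field_simp

theorem abs_measureReal_union_inter_union_sub_le {α : Type*} [MeasurableSpace α]
    (μ : Measure α) [IsFiniteMeasure μ] {A₁ A₂ B₁ B₂ : Set α}
    (hB₁ : MeasurableSet B₁) (hB₂ : MeasurableSet B₂) :
    |μ.real ((A₁ ∪ B₁) ∩ (A₂ ∪ B₂)) - (μ.real (A₁ ∩ A₂) + μ.real (B₁ ∩ B₂))|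
      ≤ μ.real (A₁ ∩ B₂) + μ.real (B₁ ∩ A₂) := by
  have hupper : μ.real ((A₁ ∪ B₁) ∩ (A₂ ∪ B₂))
      ≤ μ.real (A₁ ∩ A₂) + μ.real (B₁ ∩ B₂) + (μ.real (A₁ ∩ B₂) + μ.real (B₁ ∩ A₂)) := by
    have hsub : (A₁ ∪ B₁) ∩ (A₂ ∪ B₂) ⊆ ((A₁ ∩ A₂) ∪ (B₁ ∩ B₂)) ∪ ((A₁ ∩ B₂) ∪ (B₁ ∩ A₂)) := by
      rintro ω ⟨h₁ | h₁, h₂ | h₂⟩ <;> simp [*]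
    grw [measureReal_mono hsub, measureReal_union_le, measureReal_union_le (A₁ ∩ A₂),
      measureReal_union_le (A₁ ∩ B₂)]
  have hlower : μ.real (A₁ ∩ A₂) + μ.real (B₁ ∩ B₂)
      ≤ μ.real ((A₁ ∪ B₁) ∩ (A₂ ∪ B₂)) + μ.real (A₁ ∩ B₂) := by
    rw [← measureReal_union_add_inter (hB₁.inter hB₂)]
    exact add_le_add
      (measureReal_mono (Set.union_subset
        (Set.inter_subset_inter Set.subset_union_left Set.subset_union_left)
        (Set.inter_subset_inter Set.subset_union_right Set.subset_union_right)))
      (measureReal_mono (Set.inter_subset_inter Set.inter_subset_left Set.inter_subset_right))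
  rw [abs_sub_le_iff]
  constructor <;> linarith [measureReal_nonneg (μ := μ) (s := B₁ ∩ A₂)]

theorem setOf_lt_max_mul {Ω : Type*} (X Y : Ω → ℝ) {r s : ℝ} (hr : 0 < r) (hs : 0 < s) (z : ℝ) :
    {ω | z < max (r * X ω) (s * Y ω)} = {ω | z / r < X ω} ∪ {ω | z / s < Y ω} := by
  ext ω
  simp only [Set.mem_ofPred_eq, Set.mem_union, lt_max_iff, div_lt_iff₀' hr, div_lt_iff₀' hs]

theorem ProbabilityTheory.IndepFun.measureReal_lt_inter_lt {Ω : Type*} [MeasurableSpace Ω] {μ : Measure Ω}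
    {X Y : Ω → ℝ} (h : IndepFun X Y μ) (s t : ℝ) :
    μ.real ({ω | s < X ω} ∩ {ω | t < Y ω}) = μ.real {ω | s < X ω} * μ.real {ω | t < Y ω} := by
  simp only [Measure.real, ← ENNReal.toReal_mul]
  exact congrArg ENNReal.toReal
    (h.measure_inter_preimage_eq_mul (Set.Ioi s) (Set.Ioi t) measurableSet_Ioi measurableSet_Ioi)

theorem ProbabilityTheory.IndepFun.tendsto_mul_measureReal_lt_inter_lt {Ω : Type*} [MeasurableSpace Ω]
    {μ : Measure Ω} {X Y : Ω → ℝ} (h : IndepFun X Y μ) {r s cX cY : ℝ} (hr : 0 < r) (hs : 0 < s)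
    (hX : Tendsto (fun z => z * μ.real {ω | z < X ω}) atTop (𝓝 cX))
    (hY : Tendsto (fun z => z * μ.real {ω | z < Y ω}) atTop (𝓝 cY)) :
    Tendsto (fun z => z * μ.real ({ω | z / r < X ω} ∩ {ω | z / s < Y ω})) atTop (𝓝 0) := by
  simp only [h.measureReal_lt_inter_lt]
  exact tendsto_mul_mul_of_tendsto_mul (tendsto_mul_comp_div_const hr hX)
    (tendsto_mul_comp_div_const hs hY)

theorem max_mixture_tail_dependence_beta_eq_one_general
    {Ω : Type*} [MeasurableSpace Ω] (P : Measure Ω) [IsProbabilityMeasure P]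
    (q a b : ℝ) (hq : q ∈ Set.Ioo (0 : ℝ) 1)
    (Z₁ Z₂ Y₁ Y₂ : Ω → ℝ)
    (hY₁m : Measurable Y₁) (hY₂m : Measurable Y₂)
    (hind : IndepFun (fun ω => (Z₁ ω, Z₂ ω)) (fun ω => (Y₁ ω, Y₂ ω)) P)
    (hZ₁ : Tendsto (fun z : ℝ => z * (P {ω | z < Z₁ ω}).toReal) atTop (nhds 1))
    (hZ₂ : Tendsto (fun z : ℝ => z * (P {ω | z < Z₂ ω}).toReal) atTop (nhds 1))
    (hY₁ : Tendsto (fun z : ℝ => z * (P {ω | z < Y₁ ω}).toReal) atTop (nhds 1))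
    (hY₂ : Tendsto (fun z : ℝ => z * (P {ω | z < Y₂ ω}).toReal) atTop (nhds 1))
    (hZJ : Tendsto (fun z : ℝ => z * (P {ω | z < Z₁ ω ∧ z < Z₂ ω}).toReal) atTop (nhds a))
    (hYJ : Tendsto (fun z : ℝ => z * (P {ω | z < Y₁ ω ∧ z < Y₂ ω}).toReal) atTop (nhds b)) :
    Tendsto (fun z : ℝ => z * (P {ω | z < max (q * Z₁ ω) ((1 - q) * Y₁ ω)
        ∧ z < max (q * Z₂ ω) ((1 - q) * Y₂ ω)}).toReal) atTop
      (nhds (q * a + (1 - q) * b)) := by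
  obtain ⟨hq₀, hq₁⟩ := hq
  have hq₁' : 0 < 1 - q := sub_pos.mpr hq₁
  have hZ₁Y₂ : IndepFun Z₁ Y₂ P := hind.comp measurable_fst measurable_snd
  have hY₁Z₂ : IndepFun Y₁ Z₂ P := hind.symm.comp measurable_fst measurable_snd
  have hmain := (tendsto_mul_comp_div_const hq₀ hZJ).add (tendsto_mul_comp_div_const hq₁' hYJ)
  have hcross := (hZ₁Y₂.tendsto_mul_measureReal_lt_inter_lt hq₀ hq₁' hZ₁ hY₂).add
    (hY₁Z₂.tendsto_mul_measureReal_lt_inter_lt hq₁' hq₀ hY₁ hZ₂)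
  rw [add_zero] at hcross
  simp only [Set.ofPred_and] at hmain ⊢
  refine hmain.congr_dist (squeeze_zero' (Eventually.of_forall fun _ => dist_nonneg) ?_ hcross)
  filter_upwards [eventually_ge_atTop 0] with z hz
  rw [setOf_lt_max_mul _ _ hq₀ hq₁', setOf_lt_max_mul _ _ hq₀ hq₁', dist_comm,
    Real.dist_eq, ← mul_add, ← mul_sub, abs_mul, abs_of_nonneg hz, ← mul_add]
  exact mul_le_mul_of_nonneg_left (abs_measureReal_union_inter_union_sub_le P
    (measurableSet_lt measurable_const hY₁m) (measurableSet_lt measurable_const hY₂m)) hz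

/-- For `β = 1`, the max-mixture `max{q Zᵢ, (1-q) Yᵢ}` has upper tail-dependence
coefficient `q a + (1-q) b`: its joint exceedance rate satisfies
`z P(both > z) → q a + (1-q) b`. -/
theorem max_mixture_tail_dependence_beta_eq_one
    {Ω : Type*} [MeasurableSpace Ω] (P : Measure Ω) [IsProbabilityMeasure P]
    (q a b : ℝ) (hq : q ∈ Set.Ioo (0 : ℝ) 1) (ha : 0 ≤ a) (hb : 0 ≤ b)
    (Z₁ Z₂ Y₁ Y₂ : Ω → ℝ)
    (hZ₁m : Measurable Z₁) (hZ₂m : Measurable Z₂) (hY₁m : Measurable Y₁) (hY₂m : Measurable Y₂)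
    (hZ₁0 : ∀ ω, 0 ≤ Z₁ ω) (hZ₂0 : ∀ ω, 0 ≤ Z₂ ω) (hY₁0 : ∀ ω, 0 ≤ Y₁ ω) (hY₂0 : ∀ ω, 0 ≤ Y₂ ω)
    (hind : IndepFun (fun ω => (Z₁ ω, Z₂ ω)) (fun ω => (Y₁ ω, Y₂ ω)) P)
    (hZ₁ : Tendsto (fun z : ℝ => z * (P {ω | z < Z₁ ω}).toReal) atTop (nhds 1))
    (hZ₂ : Tendsto (fun z : ℝ => z * (P {ω | z < Z₂ ω}).toReal) atTop (nhds 1))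
    (hY₁ : Tendsto (fun z : ℝ => z * (P {ω | z < Y₁ ω}).toReal) atTop (nhds 1))
    (hY₂ : Tendsto (fun z : ℝ => z * (P {ω | z < Y₂ ω}).toReal) atTop (nhds 1))
    (hZJ : Tendsto (fun z : ℝ => z * (P {ω | z < Z₁ ω ∧ z < Z₂ ω}).toReal) atTop (nhds a))
    (hYJ : Tendsto (fun z : ℝ => z * (P {ω | z < Y₁ ω ∧ z < Y₂ ω}).toReal) atTop (nhds b)) :
    Tendsto (fun z : ℝ => z * (P {ω | z < max (q * Z₁ ω) ((1 - q) * Y₁ ω)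
        ∧ z < max (q * Z₂ ω) ((1 - q) * Y₂ ω)}).toReal) atTop
      (nhds (q * a + (1 - q) * b)) :=
  max_mixture_tail_dependence_beta_eq_one_general P q a b hq Z₁ Z₂ Y₁ Y₂ hY₁m hY₂m hind hZ₁ hZ₂ hY₁
    hY₂ hZJ hYJ
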